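/- (Lemma 2.2.) For every k ≥ 1, the function g_k : (Fin k → ZMod 12) → ZMod 12, defined by g_k x = 4 if x 0 is odd and x i ∈ {0,4,8} for all i ≠ 0, and g_k x = 0 otherwise, is a term operation of L, i.e., g_k ∈ Clo_k(L). -/

import Mathlib

/-- The natural projection `ZMod 12 → ZMod 4`. -/
def pi4 : ZMod 12 →+* ZMod 4 := ZMod.castHom (show (4:ℕ) ∣ 12 by norm_num) (ZMod 4)

/-- The cocycle `t` of Vaughan–Lee's loop. -/
def t (x y : ZMod 12) : ZMod 12 :=
  if (pi4 x = 1 ∧ pi4 y = 3) ∨ (pi4 x = 3 ∧ pi4 y = 1) then 4 else 0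

/-- The multiplication of Vaughan–Lee's loop `L`. -/
def mulL (x y : ZMod 12) : ZMod 12 := x + y + t x y

/-- `InClo k h` means `h` is a `k`-ary term function of `L`:
`h` lies in the closure of the projections under the pointwise loop operation. -/
inductive InClo (k : ℕ) : ((Fin k → ZMod 12) → ZMod 12) → Prop
  | proj (i : Fin k) : InClo k (fun x => x i)
  | mul {g h : (Fin k → ZMod 12) → ZMod 12} :
      InClo k g → InClo k h → InClo k (fun x => mulL (g x) (h x))

open scoped Classical in
/-- The function `g_{k+1}` of Lemma 2.2: it takes value `4` exactly when the first
coordinate is odd and all other coordinates lie in `C = {0,4,8}`. -/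
noncomputable def gfun (k : ℕ) : (Fin (k + 1) → ZMod 12) → ZMod 12 := fun x =>
  if Odd (x 0) ∧ ∀ i, i ≠ 0 → x i ∈ ({0, 4, 8} : Set (ZMod 12)) then 4 else 0

/-!
The shadow `pi4` is additive on `L`, and `t` depends only on shadows and has shadow `0`. Hence
multiplying a term function by a central one (values in `{0, 4, 8}`) just adds it, and a central
difference of two term functions is again a term function. Comparing `(P * x₀) * 3x₀` with
`P * 4x₀` makes `t (P x) (x 0) + t (P x + x 0) (3 * x 0) = 4 [a₀ odd] ([p = -a₀] + [p = 0])` a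
term function, where `p`, `a₀` are the shadows of `P x`, `x 0`. Taking for `P` terms with shadow
`c ⬝ᵥ b`, `b = (pi4 (x 1), …, pi4 (x k))`, and summing over all `c ∈ (ZMod 4)ᵏ` counts solutions of
`c ⬝ᵥ b = w`; as `4ᵏ ≡ 1 (mod 3)`, these counts taken mod 3 detect `b = 0`.
-/

lemma pi4_t (x y : ZMod 12) : pi4 (t x y) = 0 := by
  unfold t; split_ifs <;> decide

lemma t_add_left_of_pi4_eq_zero (x y : ZMod 12) {c : ZMod 12} (hc : pi4 c = 0) :
    t (x + c) y = t x y := by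
  simp only [t, map_add, hc, add_zero]

lemma t_of_pi4_eq_zero_right (x : ZMod 12) {y : ZMod 12} (hy : pi4 y = 0) : t x y = 0 := by
  simp only [t, hy]
  generalize pi4 x = u
  revert u; decide

lemma t_self (x : ZMod 12) : t x x = 0 := by
  simp only [t]
  generalize pi4 x = u
  revert u; decide

lemma t_two_mul_left (x y : ZMod 12) : t (2 * x) y = 0 := by
  simp only [t, map_mul, map_ofNat]
  generalize pi4 x = u, pi4 y = v
  revert u v; decide

lemma pi4_t_add_t (w x y z : ZMod 12) : pi4 (t w x + t y z) = 0 := by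
  rw [map_add, pi4_t, pi4_t, add_zero]

lemma pi4_mulL (x y : ZMod 12) : pi4 (mulL x y) = pi4 x + pi4 y := by
  rw [mulL, map_add, pi4_t, add_zero, map_add]

lemma mulL_of_pi4_eq_zero_right (x : ZMod 12) {y : ZMod 12} (hy : pi4 y = 0) :
    mulL x y = x + y := by
  rw [mulL, t_of_pi4_eq_zero_right x hy, add_zero]

lemma three_mul_of_pi4_eq_zero : ∀ {z : ZMod 12}, pi4 z = 0 → 3 * z = 0 := by
  decide

lemma pi4_four_mul (z : ZMod 12) : pi4 (4 * z) = 0 := by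
  rw [map_mul, show pi4 4 = 0 by decide, zero_mul]

def tPair (u v : ZMod 4) : ZMod 12 :=
  if v = 1 ∨ v = 3 then (if u + v = 0 then 4 else 0) + (if u = 0 then 4 else 0) else 0

lemma t_add_t_three_mul_eq (y z : ZMod 12) :
    t y z + t (y + z) (3 * z) = tPair (pi4 y) (pi4 z) := by
  simp only [t, tPair, map_add, map_mul, map_ofNat]
  generalize pi4 y = u, pi4 z = v
  revert u v; decide

namespace InClo

variable {n : ℕ} {P C : (Fin n → ZMod 12) → ZMod 12}

lemma congr {Q : (Fin n → ZMod 12) → ZMod 12} (hP : InClo n P) (h : ∀ x, P x = Q x) :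
    InClo n Q :=
  funext h ▸ hP

lemma exists_pi4_add_eq_zero (hP : InClo n P) :
    ∃ Q, InClo n Q ∧ ∀ x, pi4 (P x + Q x) = 0 := by
  induction hP with
  | proj i =>
    refine ⟨_, (proj i).mul ((proj i).mul (proj i)), fun x => ?_⟩
    simp only [map_add, pi4_mulL]
    ring_nf
    reduce_mod_char
  | mul _ _ ihg ihh =>
    obtain ⟨Qg, hQg, hg⟩ := ihg
    obtain ⟨Qh, hQh, hh⟩ := ihh
    refine ⟨_, hQg.mul hQh, fun x => ?_⟩
    have := congrArg₂ (· + ·) (hg x) (hh x)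
    simp only [map_add, pi4_mulL] at this ⊢
    linear_combination this

lemma add_of_pi4_eq_zero (hP : InClo n P) (hC : InClo n C) (hC0 : ∀ x, pi4 (C x) = 0) :
    InClo n (fun x => P x + C x) :=
  (hP.mul hC).congr fun x => mulL_of_pi4_eq_zero_right _ (hC0 x)

lemma of_add_of_pi4_eq_zero (hP : InClo n P) (hPC : InClo n (fun x => P x + C x))
    (hC0 : ∀ x, pi4 (C x) = 0) : InClo n C := by
  obtain ⟨Q, hQ, hPQ⟩ := hP.exists_pi4_add_eq_zero
  -- `E = P * Q` is central and `(P + C) * Q = E + C`; then `C = (E + C) * (E * E)` as `3 E = 0`.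
  have hE : ∀ x, pi4 (mulL (P x) (Q x)) = 0 := fun x => by
    rw [pi4_mulL, ← map_add, hPQ]
  have hEC : InClo n (fun x => mulL (P x) (Q x) + C x) :=
    (hPC.mul hQ).congr fun x => by
      rw [mulL, mulL, t_add_left_of_pi4_eq_zero _ _ (hC0 x)]
      ring
  refine (hEC.mul ((hP.mul hQ).mul (hP.mul hQ))).congr fun x => ?_
  rw [mulL_of_pi4_eq_zero_right _ (hE x)]
  rw [mulL_of_pi4_eq_zero_right _ (by rw [map_add, hE x, add_zero])]
  linear_combination three_mul_of_pi4_eq_zero (hE x)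

lemma t_add_t_three_mul (hP : InClo n P) (i : Fin n) :
    InClo n (fun x => t (P x) (x i) + t (P x + x i) (3 * x i)) := by
  have h2 : InClo n (fun x => 2 * x i) :=
    ((proj i).mul (proj i)).congr fun x => by rw [mulL, t_self]; ring
  have h3 : InClo n (fun x => 3 * x i) :=
    (h2.mul (proj i)).congr fun x => by rw [mulL, t_two_mul_left]; ring
  have h4 : InClo n (fun x => 4 * x i) :=
    (h2.mul h2).congr fun x => by rw [mulL, t_two_mul_left]; ring
  -- `(P * xᵢ) * 3xᵢ` and `P * 4xᵢ` differ exactly by the two cocycle values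
  refine of_add_of_pi4_eq_zero (hP.mul h4) (((hP.mul (proj i)).mul h3).congr fun x => ?_)
    fun x => pi4_t_add_t _ _ _ _
  rw [mulL_of_pi4_eq_zero_right _ (pi4_four_mul _), mulL, mulL,
    t_add_left_of_pi4_eq_zero _ _ (pi4_t _ _)]
  ring

variable [NeZero n]

lemma zero : InClo n (fun _ => 0) :=
  of_add_of_pi4_eq_zero (proj 0) ((proj 0).congr fun _ => (add_zero _).symm) fun _ => map_zero _

lemma sum {ι : Type*} (s : Finset ι) {C : ι → (Fin n → ZMod 12) → ZMod 12}
    (hC : ∀ j ∈ s, InClo n (C j)) (hC0 : ∀ j ∈ s, ∀ x, pi4 (C j x) = 0) :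
    InClo n (fun x => ∑ j ∈ s, C j x) := by
  classical
  induction s using Finset.induction_on with
  | empty => simpa using zero
  | insert j s hj ih =>
    simp only [Finset.sum_insert hj]
    refine add_of_pi4_eq_zero (hC j (s.mem_insert_self j))
      (ih (fun i hi => hC i (Finset.mem_insert_of_mem hi))
        (fun i hi => hC0 i (Finset.mem_insert_of_mem hi)))
      fun x => ?_
    rw [map_sum]
    exact Finset.sum_eq_zero fun i hi => hC0 i (Finset.mem_insert_of_mem hi) x

lemma exists_pi4_eq_natCast_mul (i : Fin n) (m : ℕ) :
    ∃ P, InClo n P ∧ ∀ x, pi4 (P x) = m * pi4 (x i) := by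
  induction m with
  | zero => exact ⟨0, zero, fun _ => by simp⟩
  | succ m ih =>
    obtain ⟨P, hP, hPx⟩ := ih
    exact ⟨_, hP.mul (proj i), fun x => by rw [pi4_mulL, hPx]; push_cast; ring⟩

lemma exists_pi4_eq_sum (c : Fin n → ZMod 4) :
    ∃ P, InClo n P ∧ ∀ x, pi4 (P x) = ∑ i, c i * pi4 (x i) := by
  classical
  induction (Finset.univ : Finset (Fin n)) using Finset.induction_on with
  | empty => exact ⟨0, zero, fun _ => by simp⟩
  | insert j s hj ih =>
    obtain ⟨P, hP, hPx⟩ := ih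
    obtain ⟨Q, hQ, hQx⟩ := exists_pi4_eq_natCast_mul j (c j).val
    refine ⟨_, hQ.mul hP, fun x => ?_⟩
    rw [pi4_mulL, hPx, hQx, ZMod.natCast_zmod_val, Finset.sum_insert hj]

end InClo

section Counting

open Finset

lemma card_fiber_eq_ite {G A : Type*} [AddGroup G] [Fintype G] [AddGroup A] [DecidableEq A]
    (f : G →+ A) (w : A) : #{g | f g = w} = if w ∈ f.range then Nat.card f.ker else 0 := by
  split_ifs with h
  · rw [AddMonoidHom.card_fiber_eq_of_mem_range f h ⟨0, map_zero f⟩]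
    simp [Nat.card_eq_fintype_card, Fintype.card_subtype]
  · rw [card_eq_zero, filter_eq_empty_iff]
    exact fun g _ hg => h ⟨g, hg⟩

lemma addSubgroup_eq_top_of_isUnit_mem {n : ℕ} [NeZero n] {H : AddSubgroup (ZMod n)}
    {v : ZMod n} (hv : IsUnit v) (h : v ∈ H) : H = ⊤ := by
  refine (AddSubgroup.eq_top_iff' H).2 fun u => ?_
  simpa [mul_assoc] using H.nsmul_mem h (u * ↑hv.unit⁻¹).val

/- `|ker f| * |range f| = |G| ≡ 1 (mod 3)` with `|range f| ∈ {1, 2, 4}`, and `4 * m` in `ZMod 12`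
only depends on `m mod 3`. -/
lemma four_mul_card_fiber_add_card_ker {G : Type*} [AddCommGroup G] [Fintype G]
    (hG : Nat.card G ≡ 1 [MOD 3]) (f : G →+ ZMod 4) {v : ZMod 4} (hv : IsUnit v) :
    (4 : ZMod 12) * (#{g | f g = v} + #{g | f g = 0} : ℕ) = if f = 0 then 4 else 8 := by
  have hKR : (4 : ZMod 12) * Nat.card f.ker * Nat.card f.range = 4 := by
    have h := (ZMod.natCast_eq_natCast_iff _ _ 12).2 (Nat.ModEq.mul_left' 4 hG)
    rw [mul_assoc, ← Nat.cast_mul, ← AddSubgroup.index_ker f, f.ker.card_mul_index]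
    exact_mod_cast h
  have hvR : v ∈ f.range ↔ Nat.card f.range = Nat.card (ZMod 4) := by
    rw [AddSubgroup.card_eq_iff_eq_top]
    exact ⟨addSubgroup_eq_top_of_isUnit_mem hv, fun h => h ▸ trivial⟩
  have hf0 : f = 0 ↔ Nat.card f.range = 1 := by
    rw [AddSubgroup.card_eq_one, AddMonoidHom.range_eq_bot_iff]
  have hR : Nat.card f.range ∣ Nat.card (ZMod 4) := f.range.card_addSubgroup_dvd_card
  rw [card_fiber_eq_ite, card_fiber_eq_ite, if_pos (zero_mem _), if_congr hvR rfl rfl,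
    if_congr hf0 rfl rfl]
  rw [Nat.card_zmod] at hR
  generalize Nat.card f.ker = K at *
  generalize Nat.card f.range = R at *
  have hR4 : R ≤ 4 := Nat.le_of_dvd (by norm_num) hR
  have hR0 : 0 < R := Nat.pos_of_dvd_of_pos hR (by norm_num)
  interval_cases R
  · simpa using hKR
  · norm_num at hKR ⊢
    linear_combination (norm := skip) 2 * hKR
    ring_nf
    reduce_mod_char
  · norm_num at hR
  · norm_num at hKR ⊢
    linear_combination (norm := skip) 2 * hKR
    ring_nf
    reduce_mod_char

end Counting

open Finset in
lemma two_mul_tPair_add_two_mul_sum {k : ℕ} (v : ZMod 4) (b : Fin k → ZMod 4) :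
    2 * tPair 0 v + 2 * ∑ c : Fin k → ZMod 4, tPair (c ⬝ᵥ b) v =
      if (v = 1 ∨ v = 3) ∧ b = 0 then 4 else 0 := by
  by_cases hv : v = 1 ∨ v = 3
  · let f : (Fin k → ZMod 4) →+ ZMod 4 :=
      AddMonoidHom.mk' (· ⬝ᵥ b) fun c d => add_dotProduct c d b
    have hf0 : f = 0 ↔ b = 0 := by
      refine ⟨fun h => funext fun i => ?_, fun h => by ext c; simp [f, h]⟩
      simpa [f] using DFunLike.congr_fun h (Pi.single i 1)
    have hG : Nat.card (Fin k → ZMod 4) ≡ 1 [MOD 3] := by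
      simpa using (show 4 ≡ 1 [MOD 3] by decide).pow k
    have hcount := four_mul_card_fiber_add_card_ker hG f (v := -v)
      (by rcases hv with rfl | rfl <;> decide)
    rw [if_congr hf0 rfl rfl] at hcount
    have hsum : ∑ c : Fin k → ZMod 4, tPair (c ⬝ᵥ b) v =
        4 * (#{c | f c = -v} + #{c | f c = 0} : ℕ) := by
      simp only [tPair, hv, if_true, sum_add_distrib, ← add_eq_zero_iff_eq_neg]
      rw [Nat.cast_add, mul_add]
      congr 1 <;> rw [← sum_boole, mul_sum] <;> simp [f]
    have h0 : tPair 0 v = 4 := by rcases hv with rfl | rfl <;> decide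
    rw [hsum, hcount, h0]
    by_cases hb : b = 0 <;> simp [hb, hv] <;> decide
  · simp [tPair, hv]

lemma odd_iff_pi4 (z : ZMod 12) : Odd z ↔ pi4 z = 1 ∨ pi4 z = 3 := by
  constructor
  · rintro ⟨m, rfl⟩
    revert m; decide
  · have h : ∀ z : ZMod 12, pi4 z = 1 ∨ pi4 z = 3 → ∃ m, z = 2 * m + 1 := by decide
    exact h z

lemma mem_zero_four_eight_iff (z : ZMod 12) :
    z ∈ ({0, 4, 8} : Set (ZMod 12)) ↔ pi4 z = 0 := by
  simp only [Set.mem_insert_iff, Set.mem_singleton_iff]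
  revert z; decide

lemma gfun_eq (k : ℕ) (x : Fin (k + 1) → ZMod 12) :
    gfun k x = if (pi4 (x 0) = 1 ∨ pi4 (x 0) = 3) ∧ (fun i : Fin k => pi4 (x i.succ)) = 0
      then 4 else 0 := by
  simp only [gfun, odd_iff_pi4, mem_zero_four_eight_iff, funext_iff, Pi.zero_apply]
  congr 2
  exact propext ⟨fun h i => h i.succ (Fin.succ_ne_zero i), fun h i hi => by
    simpa using h (i.pred hi)⟩

theorem stmt_7 (k : ℕ) : InClo (k + 1) (gfun k) := by
  choose P hP hPx using fun c : Fin k → ZMod 4 => InClo.exists_pi4_eq_sum (Fin.cons 0 c)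
  have hO := (InClo.zero (n := k + 1)).t_add_t_three_mul 0
  have hS := InClo.sum Finset.univ (fun c _ => (hP c).t_add_t_three_mul 0)
    fun c _ _ => pi4_t_add_t _ _ _ _
  have hS0 (x : Fin (k + 1) → ZMod 12) :
      pi4 (∑ c, (t (P c x) (x 0) + t (P c x + x 0) (3 * x 0))) = 0 := by
    rw [map_sum]
    exact Finset.sum_eq_zero fun c _ => pi4_t_add_t _ _ _ _
  have hOO := hO.add_of_pi4_eq_zero hO fun _ => pi4_t_add_t _ _ _ _
  refine ((hOO.add_of_pi4_eq_zero hS hS0).add_of_pi4_eq_zero hS hS0).congr fun x => ?_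
  have hdot (c : Fin k → ZMod 4) : pi4 (P c x) = c ⬝ᵥ fun i => pi4 (x i.succ) := by
    rw [hPx, Fin.sum_univ_succ]
    simp [dotProduct]
  simp only [t_add_t_three_mul_eq, hdot, gfun_eq]
  rw [map_zero, ← two_mul_tPair_add_two_mul_sum]
  ring
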